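/- arXiv:2207.06005 — 2 statements merged into one kernel-verified Lean document; each statement's English description precedes it below -/
import Mathlib

section
/- Let q ≥ 0 be an integer. If A is a finitely generated abelian group, then A⊗^q A is a finitely generated group. -/
/-!
Nonabelian tensor square modulo `q` (Conduché–Ellis / Brown–Loday for `q = 0`),
presented by generators `g ⊗ h` and `{(g,g)}` with the defining relations.
-/

namespace QTensor

/-- Generators of the `q`-tensor square: `t g h` stands for `g ⊗ h`,
and `d g` stands for the symbol `{(g,g)}`. -/
inductive Gen (G : Type) : Type
  | t : G → G → Gen G
  | d : G → Gen G

variable (G : Type) [Group G]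

/-- The word `g ⊗ h` in the free group on the generators. -/
def T (g h : G) : FreeGroup (Gen G) := FreeGroup.of (Gen.t g h)

/-- The word `{(g,g)}` in the free group on the generators. -/
def D (g : G) : FreeGroup (Gen G) := FreeGroup.of (Gen.d g)

/-- The word `∏_{i=1}^{q-1} (g⁻¹ ⊗ (^(g^(1-q+i)) g₁)^i)` appearing in relation (4). -/
def relProd (q : ℕ) (g g₁ : G) : FreeGroup (Gen G) :=
  ((List.range (q - 1)).map (fun j =>
    T G g⁻¹ ((g ^ ((1 : ℤ) - (q : ℤ) + (j + 1 : ℕ)) * g₁ *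
      (g ^ ((1 : ℤ) - (q : ℤ) + (j + 1 : ℕ)))⁻¹) ^ (j + 1)))).prod

/-- The defining relations of the `q`-tensor square.  For `q = 0` the symbols
`{(g,g)}` are killed, so that the group is the Brown–Loday nonabelian tensor
square generated by the `g ⊗ h` subject to relations (1) and (2). -/
def rels (q : ℕ) : Set (FreeGroup (Gen G)) :=
  {r | ∃ g g₁ h : G,
      r = T G (g * g₁) h * (T G (g * g₁ * g⁻¹) (g * h * g⁻¹) * T G g h)⁻¹} ∪
  {r | ∃ g h h₁ : G,
      r = T G g (h * h₁) * (T G g h * T G (h * g * h⁻¹) (h * h₁ * h⁻¹))⁻¹} ∪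
  {r | ∃ g g₁ h₁ : G,
      r = D G g * T G g₁ h₁ * (D G g)⁻¹ *
        (T G (g ^ q * g₁ * (g ^ q)⁻¹) (g ^ q * h₁ * (g ^ q)⁻¹))⁻¹} ∪
  {r | ∃ g g₁ : G,
      r = D G (g * g₁) * (D G g * relProd G q g g₁ * D G g₁)⁻¹} ∪
  {r | ∃ g g₁ : G,
      r = D G g * D G g₁ * (D G g)⁻¹ * (D G g₁)⁻¹ * (T G (g ^ q) (g₁ ^ q))⁻¹} ∪
  {r | ∃ g h : G,
      r = D G (g * h * g⁻¹ * h⁻¹) * ((T G g h) ^ q)⁻¹} ∪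
  {r | q = 0 ∧ ∃ g : G, r = D G g}

/-- The nonabelian tensor square modulo `q`, `G ⊗^q G`. -/
def tensorSquare (q : ℕ) : Type := PresentedGroup (rels G q)

instance (q : ℕ) : Group (tensorSquare G q) := by unfold tensorSquare; infer_instance

/-- The element `g ⊗ h` of `G ⊗^q G`. -/
def tmk (q : ℕ) (g h : G) : tensorSquare G q := PresentedGroup.of (Gen.t g h)

/-- The element `{(g,g)}` of `G ⊗^q G`. -/
def dmk (q : ℕ) (g : G) : tensorSquare G q := PresentedGroup.of (Gen.d g)

/-- `∇^q(G)`, the normal closure of the elements `g ⊗ g` in `G ⊗^q G`. -/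
def nabla (q : ℕ) : Subgroup (tensorSquare G q) :=
  Subgroup.normalClosure {x | ∃ g : G, x = tmk G q g g}

instance (q : ℕ) : (nabla G q).Normal := Subgroup.normalClosure_normal

/-- The exterior square modulo `q`, `G ∧^q G = (G ⊗^q G)/∇^q(G)`. -/
def extSquare (q : ℕ) : Type := tensorSquare G q ⧸ nabla G q

instance (q : ℕ) : Group (extSquare G q) := by unfold extSquare; infer_instance

/-- The element `g ∧ h` of `G ∧^q G`. -/
def wmk (q : ℕ) (g h : G) : extSquare G q := QuotientGroup.mk (tmk G q g h)

/-- The image of the symbol `{(g,g)}` in `G ∧^q G`. -/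
def dwmk (q : ℕ) (g : G) : extSquare G q := QuotientGroup.mk (dmk G q g)

/-- The exterior centre variant `Z^∧_q(G) = {g : g ∧ h = 1 for all h}` (as a set). -/
def Zext (q : ℕ) : Set G := {g | ∀ h : G, wmk G q g h = 1}

/-- `E^∧_q(G) = {g ∈ Z^∧_q(G) : {(g,g)} = 1 in G ∧^q G}` (as a set); for `q = 0`
the second condition is automatic, so `E^∧_0(G) = Z^∧(G)`. -/
def Eext (q : ℕ) : Set G := {g | (∀ h : G, wmk G q g h = 1) ∧ dwmk G q g = 1}

/-- The subgroup `G^q[G,G]` generated by all `q`-th powers and all commutators. -/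
def qPowComm (q : ℕ) : Subgroup G :=
  Subgroup.closure ({x | ∃ g : G, x = g ^ q} ∪ {x | ∃ a b : G, x = a * b * a⁻¹ * b⁻¹})

theorem pow_mem_qPowComm (q : ℕ) (g : G) : g ^ q ∈ qPowComm G q :=
  Subgroup.subset_closure (Or.inl ⟨g, rfl⟩)

theorem commutator_mem_qPowComm (q : ℕ) (a b : G) :
    a * b * a⁻¹ * b⁻¹ ∈ qPowComm G q :=
  Subgroup.subset_closure (Or.inr ⟨a, b, rfl⟩)

open scoped commutatorElement in
theorem mem_commutator (a b : G) : ⁅a, b⁆ ∈ commutator G :=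
  Subgroup.commutator_mem_commutator (Subgroup.mem_top a) (Subgroup.mem_top b)

/-- `M₀^q(G)`: the subgroup of `G ∧^q G` generated by the `x ∧ y` with `[x,y] = 1`.
(It is contained in the `q`-Schur multiplier `M^q(G)`.) -/
def M0 (q : ℕ) : Subgroup (extSquare G q) :=
  Subgroup.closure {x | ∃ a b : G, a * b = b * a ∧ x = wmk G q a b}

/-- `M̂₀^q(G)`: the subgroup of `G ∧^q G` generated by the `x ∧ y` with `[x,y] = 1`
together with the `{(g,g)}` with `g^q = 1`. -/
def M0hat (q : ℕ) : Subgroup (extSquare G q) :=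
  Subgroup.closure
    ({x | ∃ a b : G, a * b = b * a ∧ x = wmk G q a b} ∪
     {x | ∃ g : G, g ^ q = 1 ∧ x = dwmk G q g})

/-- A group `Q` is capable if `Q ≅ E/Z(E)` for some group `E`. -/
def Capable (Q : Type) [Group Q] : Prop :=
  ∃ (E : Type) (_ : Group E), Nonempty (Q ≃* E ⧸ Subgroup.center E)

end QTensor

/-!
Over an abelian group conjugation is trivial, so relations (1) and (2) make `⊗` bilinear, and
relation (4) writes `{(gg₁,gg₁)}` as `{(g,g)}{(g₁,g₁)}` up to a product of tensors. Hence, if `S`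
generates `A`, the finitely many symbols `s ⊗ t` and `{(s,s)}` with `s, t ∈ S` generate `A ⊗^q A`.
-/

namespace QTensor

section Group

variable {G : Type} [Group G] {q : ℕ}

variable (G q) in
def mk : FreeGroup (Gen G) →* tensorSquare G q := PresentedGroup.mk (rels G q)

theorem mk_eq_one_of_mem_rels {r : FreeGroup (Gen G)} (hr : r ∈ rels G q) : mk G q r = 1 :=
  PresentedGroup.one_of_mem hr

theorem mk_T (g h : G) : mk G q (T G g h) = tmk G q g h := rfl

theorem dmk_mul (g g₁ : G) :
    dmk G q (g * g₁) = dmk G q g * mk G q (relProd G q g g₁) * dmk G q g₁ := by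
  have hr := mk_eq_one_of_mem_rels (q := q)
    (Or.inl (Or.inl (Or.inl (Or.inr ⟨g, g₁, rfl⟩))))
  rw [map_mul, map_inv, mul_inv_eq_one, map_mul, map_mul] at hr
  exact hr

theorem mk_relProd_mem {K : Subgroup (tensorSquare G q)} (hK : ∀ g h, tmk G q g h ∈ K)
    (g g₁ : G) : mk G q (relProd G q g g₁) ∈ K := by
  rw [relProd, map_list_prod]
  refine Subgroup.list_prod_mem K fun x hx => ?_
  obtain ⟨w, hw, rfl⟩ := List.mem_map.mp hx
  obtain ⟨j, -, rfl⟩ := List.mem_map.mp hw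
  exact hK _ _

/-- By relation (4), once `K` contains all tensors, the `g` with `{(g,g)} ∈ K` form a subgroup. -/
theorem dmk_mem_of_closure_eq_top {K : Subgroup (tensorSquare G q)}
    (hK : ∀ g h, tmk G q g h ∈ K) {S : Set G} (hS : Subgroup.closure S = ⊤)
    (hSK : ∀ s ∈ S, dmk G q s ∈ K) (g : G) : dmk G q g ∈ K := by
  have dmk_one_mem : dmk G q 1 ∈ K := by
    have h := dmk_mul (q := q) (1 : G) 1
    rw [one_mul, mul_assoc, left_eq_mul, mul_eq_one_iff_inv_eq] at h
    exact h ▸ inv_mem (mk_relProd_mem hK 1 1)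
  induction hS.ge (Subgroup.mem_top g) using Subgroup.closure_induction with
  | mem s hs => exact hSK s hs
  | one => exact dmk_one_mem
  | mul x y _ _ hx hy =>
    rw [dmk_mul]
    exact mul_mem (mul_mem hx (mk_relProd_mem hK x y)) hy
  | inv x _ hx =>
    have h : dmk G q x⁻¹ =
        (dmk G q x * mk G q (relProd G q x x⁻¹))⁻¹ * dmk G q 1 := by
      rw [← mul_inv_cancel x, dmk_mul, inv_mul_cancel_left]
    rw [h]
    exact mul_mem (inv_mem (mul_mem hx (mk_relProd_mem hK x x⁻¹))) dmk_one_mem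

end Group

section CommGroup

variable {A : Type} [CommGroup A] {q : ℕ}

theorem tmk_mul_left (g g₁ h : A) :
    tmk A q (g * g₁) h = tmk A q g₁ h * tmk A q g h := by
  have hr := mk_eq_one_of_mem_rels (q := q)
    (Or.inl (Or.inl (Or.inl (Or.inl (Or.inl (Or.inl ⟨g, g₁, h, rfl⟩))))))
  rw [map_mul, map_inv, mul_inv_eq_one, map_mul] at hr
  simpa only [mk_T, mul_inv_cancel_comm] using hr

theorem tmk_mul_right (g h h₁ : A) :
    tmk A q g (h * h₁) = tmk A q g h * tmk A q g h₁ := by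
  have hr := mk_eq_one_of_mem_rels (q := q)
    (Or.inl (Or.inl (Or.inl (Or.inl (Or.inl (Or.inr ⟨g, h, h₁, rfl⟩))))))
  rw [map_mul, map_inv, mul_inv_eq_one, map_mul] at hr
  simpa only [mk_T, mul_inv_cancel_comm] using hr

def tmkLeftHom (h : A) : A →* tensorSquare A q :=
  MonoidHom.mk' (tmk A q · h) fun g g₁ => by rw [mul_comm g, tmk_mul_left]

def tmkRightHom (g : A) : A →* tensorSquare A q :=
  MonoidHom.mk' (tmk A q g) (tmk_mul_right g)

theorem tmk_mem_closure_image2 {S : Set A} (hS : Subgroup.closure S = ⊤) (g h : A) :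
    tmk A q g h ∈ Subgroup.closure (Set.image2 (tmk A q) S S) := by
  have image_mem {B : Type} [Group B] (f : A →* B) (a : A) : f a ∈ Subgroup.closure (f '' S) :=
    MonoidHom.map_closure f S ▸ Subgroup.mem_map_of_mem f (hS ▸ Subgroup.mem_top a)
  have tmk_generator_mem (s : A) (hs : s ∈ S) :
      tmk A q s h ∈ Subgroup.closure (Set.image2 (tmk A q) S S) :=
    Subgroup.closure_mono (Set.image_subset_image2_right hs) (image_mem (tmkRightHom s) h)
  exact (Subgroup.closure_le _).mpr (Set.forall_mem_image.mpr tmk_generator_mem)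
    (image_mem (tmkLeftHom h) g)

theorem closure_tmk_dmk_eq_top {S : Set A} (hS : Subgroup.closure S = ⊤) :
    Subgroup.closure (Set.image2 (tmk A q) S S ∪ dmk A q '' S) = ⊤ := by
  set K := Subgroup.closure (Set.image2 (tmk A q) S S ∪ dmk A q '' S)
  have tmk_mem (g h : A) : tmk A q g h ∈ K :=
    Subgroup.closure_mono Set.subset_union_left (tmk_mem_closure_image2 hS g h)
  refine (Subgroup.eq_top_iff' K).mpr (PresentedGroup.generated_by (rels A q) K ?_)
  rintro (⟨g, h⟩ | g)
  · exact tmk_mem g h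
  · exact dmk_mem_of_closure_eq_top tmk_mem hS
      (fun s hs => Subgroup.subset_closure (Or.inr ⟨s, hs, rfl⟩)) g

end CommGroup

end QTensor

open QTensor in
/-- If `A` is a finitely generated abelian group, then `A ⊗^q A` is finitely
generated. -/
theorem tensorSquare_fg_of_fg (q : ℕ) (A : Type) [CommGroup A] [Group.FG A] :
    Group.FG (tensorSquare A q) := by
  obtain ⟨S, hS, hSfin⟩ := Group.fg_iff.mp ‹Group.FG A›
  exact Group.fg_iff.mpr ⟨_, closure_tmk_dmk_eq_top hS,
    (hSfin.image2 _ hSfin).union (hSfin.image _)⟩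
end

section
/- Let q ≥ 0 be an integer, G a group, and k an odd integer. If (g⊗g)^k = 1 in G⊗^q G for all g ∈ G, then G⊗^q G ≅ ∇^q(G) × (G∧^q G). -/
/-!
Write `d a = a ⊗ a` and `s a b = (a ⊗ b) (b ⊗ a)`. Comparing the two ways of expanding
`(x a) ⊗ (y b)` by relations (1) and (2) shows that every `d a` commutes with every `x ⊗ y`;
since conjugation by `{(g,g)}` also permutes the `d a`, the subgroup `∇^q(G)` is generated by
them and is abelian, and it contains every `s a b`. Unconditionally `d (u a u⁻¹) ^ 2 = d a ^ 2`,
so if every `d a` has odd order dividing `2j + 1`, then `d` is constant on conjugacy classes. Then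
`s` is a symmetric bilinear map `G × G → ∇^q(G)` killed by `q`, with `d (a b) = s a b · d a · d b`,
and the defining relations show that `a ⊗ b ↦ s a b` extends to a homomorphism
`G ⊗^q G → ∇^q(G)`. It maps `d a` to `s a a = d a ^ 2`, so its `(-j)`-th power is a retraction
onto the normal subgroup `∇^q(G)`, which therefore splits off as a direct factor.
-/

open scoped IsMulCommutative

theorem sq_zpow_neg_eq_self {H : Type*} [Group H] {x : H} {j : ℤ} (hx : x ^ (2 * j + 1) = 1) :
    (x ^ 2) ^ (-j) = x := by
  rw [← zpow_natCast, ← zpow_mul, ← mul_one (x ^ _), ← hx, ← zpow_add]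
  norm_num

theorem List.prod_range_pred_map_pow_succ {M : Type*} [Monoid M] (x : M) (n : ℕ) :
    ((List.range (n - 1)).map fun j => x ^ (j + 1)).prod = x ^ n.choose 2 := by
  cases n with
  | zero => simp
  | succ n =>
    induction n with
    | zero => simp
    | succ n ih =>
      rw [Nat.add_sub_cancel] at ih ⊢
      rw [List.prod_range_succ, ih, ← pow_add, Nat.choose_succ_succ' (n + 1), Nat.choose_one_right,
        add_comm]

theorem Subgroup.mem_normalizer_of_conj_mem {G : Type*} [Group G] {s : Set G} {g : G}
    (h₁ : ∀ n ∈ s, g * n * g⁻¹ ∈ s) (h₂ : ∀ n ∈ s, g⁻¹ * n * g ∈ s) : g ∈ normalizer s :=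
  fun n => ⟨h₁ n, fun h => by simpa [mul_assoc] using h₂ _ h⟩

theorem Subgroup.normalClosure_eq_closure_of_normalizer_eq_top {G : Type*} [Group G] {s : Set G}
    (hs : normalizer s = ⊤) : normalClosure s = closure s := by
  refine le_antisymm (closure_mono fun x hx => ?_) (closure_le _ |>.mpr subset_normalClosure)
  obtain ⟨b, hb, hbx⟩ := Group.mem_conjugatesOfSet_iff.mp hx
  obtain ⟨c, rfl⟩ := isConj_iff.mp hbx
  exact (mem_set_normalizer_iff.mp (hs ▸ mem_top c) b).mp hb

noncomputable def Subgroup.prodQuotientEquivOfRetraction {G : Type*} [Group G] (N : Subgroup G)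
    [N.Normal] (r : G →* N) (hr : ∀ n : N, r n = n) : G ≃* N × G ⧸ N :=
  MulEquiv.ofBijective (r.prod (QuotientGroup.mk' N)) <| by
    refine ⟨(injective_iff_map_eq_one _).mpr fun x hx => ?_, fun ⟨n, y⟩ => ?_⟩
    · obtain ⟨hrx, hx⟩ := Prod.ext_iff.mp hx
      have hxN : x ∈ N := (QuotientGroup.eq_one_iff x).mp hx
      simpa [hr ⟨x, hxN⟩] using congrArg Subtype.val hrx
    · obtain ⟨y, rfl⟩ := QuotientGroup.mk'_surjective N y
      refine ⟨y * (r y : G)⁻¹ * n, Prod.ext ?_ ?_⟩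
      · simp [hr]
      · simp

namespace QTensor

variable {G : Type} [Group G] {q : ℕ}

local notation:65 a:66 " ⊗ " b:66 => tmk G q a b

/-! ### The defining relations -/

theorem tmk_mul_left_s15 (g g₁ h : G) : g * g₁ ⊗ h = (g * g₁ * g⁻¹ ⊗ g * h * g⁻¹) * (g ⊗ h) :=
  PresentedGroup.mk_eq_mk_of_mul_inv_mem
    (Or.inl (Or.inl (Or.inl (Or.inl (Or.inl (Or.inl ⟨g, g₁, h, rfl⟩))))))

theorem tmk_mul_right_s15 (g h h₁ : G) : g ⊗ h * h₁ = (g ⊗ h) * (h * g * h⁻¹ ⊗ h * h₁ * h⁻¹) :=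
  PresentedGroup.mk_eq_mk_of_mul_inv_mem
    (Or.inl (Or.inl (Or.inl (Or.inl (Or.inl (Or.inr ⟨g, h, h₁, rfl⟩))))))

theorem dmk_mul_tmk_mul_inv (g a b : G) :
    dmk G q g * (a ⊗ b) * (dmk G q g)⁻¹ = g ^ q * a * (g ^ q)⁻¹ ⊗ g ^ q * b * (g ^ q)⁻¹ :=
  PresentedGroup.mk_eq_mk_of_mul_inv_mem
    (Or.inl (Or.inl (Or.inl (Or.inl (Or.inr ⟨g, a, b, rfl⟩)))))

theorem dmk_mul_s15 (g g₁ : G) :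
    dmk G q (g * g₁) = dmk G q g * ((List.range (q - 1)).map fun j =>
      g⁻¹ ⊗ (g ^ ((1 : ℤ) - q + (j + 1 : ℕ)) * g₁ * (g ^ ((1 : ℤ) - q + (j + 1 : ℕ)))⁻¹) ^ (j + 1)
      ).prod * dmk G q g₁ := by
  refine (PresentedGroup.mk_eq_mk_of_mul_inv_mem
    (Or.inl (Or.inl (Or.inl (Or.inr ⟨g, g₁, rfl⟩))))).trans ?_
  rw [map_mul, map_mul, relProd, map_list_prod, List.map_map]
  rfl

theorem dmk_commutator (g h : G) : dmk G q (g * h * g⁻¹ * h⁻¹) = (g ⊗ h) ^ q :=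
  (PresentedGroup.mk_eq_mk_of_mul_inv_mem (Or.inl (Or.inr ⟨g, h, rfl⟩))).trans (map_pow _ _ _)

@[simp]
theorem one_tmk (h : G) : 1 ⊗ h = 1 := by
  simpa using tmk_mul_left_s15 (G := G) (q := q) 1 1 h

@[simp]
theorem tmk_one (g : G) : g ⊗ 1 = 1 := by
  simpa using tmk_mul_right_s15 (G := G) (q := q) g 1 1

theorem tmk_conj_mul_tmk (x y a b : G) :
    (x * y * a * (x * y)⁻¹ ⊗ x * y * b * (x * y)⁻¹) * (x ⊗ y) =
      (x ⊗ y) * (y * x * a * (y * x)⁻¹ ⊗ y * x * b * (y * x)⁻¹) := by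
  have expand_left : x * a ⊗ y * b = (x * a * x⁻¹ ⊗ x * y * x⁻¹) *
      (x * y * a * (x * y)⁻¹ ⊗ x * y * b * (x * y)⁻¹) *
      ((x ⊗ y) * (y * x * y⁻¹ ⊗ y * b * y⁻¹)) := by
    rw [tmk_mul_left_s15, tmk_mul_right_s15 x y b,
      show x * (y * b) * x⁻¹ = x * y * x⁻¹ * (x * b * x⁻¹) by group, tmk_mul_right_s15]
    congr 3 <;> group
  have expand_right : x * a ⊗ y * b = (x * a * x⁻¹ ⊗ x * y * x⁻¹) * ((x ⊗ y) *
      ((y * x * a * (y * x)⁻¹ ⊗ y * x * b * (y * x)⁻¹) * (y * x * y⁻¹ ⊗ y * b * y⁻¹))) := by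
    rw [tmk_mul_right_s15, tmk_mul_left_s15 x a y,
      show y * (x * a) * y⁻¹ = y * x * y⁻¹ * (y * a * y⁻¹) by group, tmk_mul_left_s15 (y * x * y⁻¹)]
    simp only [mul_assoc]
    congr 4 <;> group
  have h := expand_left.symm.trans expand_right
  simp only [mul_assoc, mul_right_inj] at h
  simpa only [← mul_assoc, mul_left_inj] using h

theorem commute_tmk_self (g a b : G) : Commute (g ⊗ g) (a ⊗ b) := by
  have h := tmk_conj_mul_tmk (q := q) g g ((g * g)⁻¹ * a * (g * g)) ((g * g)⁻¹ * b * (g * g))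
  rw [show g * g * ((g * g)⁻¹ * a * (g * g)) * (g * g)⁻¹ = a by group,
    show g * g * ((g * g)⁻¹ * b * (g * g)) * (g * g)⁻¹ = b by group] at h
  exact h.symm

theorem tmk_mul_self (w v : G) : w * v ⊗ w * v =
    (w * v * w⁻¹ ⊗ w * v * w⁻¹) * (w ⊗ v) * (v * w * v⁻¹ ⊗ v * w * v⁻¹) * (v ⊗ w) := by
  have h := tmk_mul_right_s15 (q := q) (w * v) v (v⁻¹ * w * v)
  rw [show v * (v⁻¹ * w * v) * v⁻¹ = w by group, show v * (v⁻¹ * w * v) = w * v by group,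
    show v * (w * v) * v⁻¹ = v * w by group] at h
  rw [h, tmk_mul_left_s15 w v v, tmk_mul_left_s15 v w w]
  simp only [mul_assoc]

theorem tmk_mul_tmk_swap (w v : G) : (w ⊗ v) * (v ⊗ w) =
    (w * v * w⁻¹ ⊗ w * v * w⁻¹)⁻¹ * (w * v ⊗ w * v) * (v * w * v⁻¹ ⊗ v * w * v⁻¹)⁻¹ := by
  rw [tmk_mul_self w v, mul_assoc _ (v * w * v⁻¹ ⊗ _), (commute_tmk_self _ v w).eq]
  group

theorem tmk_pow_self (u : G) (n : ℕ) : u ⊗ u ^ n = (u ⊗ u) ^ n := by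
  induction n with
  | zero => simp
  | succ n ih =>
    rw [pow_succ', tmk_mul_right_s15, show u * u * u⁻¹ = u by group,
      show u * u ^ n * u⁻¹ = u ^ n by group, ih, pow_succ']

theorem inv_dmk_mul_tmk_mul_dmk (g a b : G) :
    (dmk G q g)⁻¹ * (a ⊗ b) * dmk G q g = (g ^ q)⁻¹ * a * g ^ q ⊗ (g ^ q)⁻¹ * b * g ^ q := by
  have h := dmk_mul_tmk_mul_inv (q := q) g ((g ^ q)⁻¹ * a * g ^ q) ((g ^ q)⁻¹ * b * g ^ q)
  rw [show g ^ q * ((g ^ q)⁻¹ * a * g ^ q) * (g ^ q)⁻¹ = a by group,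
    show g ^ q * ((g ^ q)⁻¹ * b * g ^ q) * (g ^ q)⁻¹ = b by group] at h
  rw [← h]
  group

@[simp]
theorem dmk_one : dmk G q (1 : G) = 1 := by
  simpa using dmk_commutator (G := G) (q := q) 1 1

theorem dmk_mul_dmk_inv (c : G) (hc : c⁻¹ ⊗ c⁻¹ = 1) : dmk G q c * dmk G q c⁻¹ = 1 := by
  have h := dmk_mul_s15 (q := q) c c⁻¹
  rw [mul_inv_cancel, dmk_one, List.prod_eq_one, mul_one] at h
  · exact h.symm
  · simp only [List.mem_map]
    rintro _ ⟨j, -, rfl⟩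
    rw [((Commute.refl c).zpow_left _).inv_right.mul_inv_cancel, tmk_pow_self, hc, one_pow]

/-! ### The subgroup `∇^q(G)` -/

theorem normalizer_tmk_self_eq_top :
    Subgroup.normalizer {x : tensorSquare G q | ∃ g : G, x = g ⊗ g} = ⊤ := by
  refine eq_top_iff.mpr fun x _ => PresentedGroup.generated_by _ _ (fun j => ?_) x
  cases j with
  | t a b =>
    refine Subgroup.mem_normalizer_of_conj_mem ?_ ?_ <;> rintro _ ⟨g, rfl⟩ <;> refine ⟨g, ?_⟩
    · exact (commute_tmk_self g a b).symm.mul_inv_cancel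
    · exact (commute_tmk_self g a b).symm.inv_left.mul_inv_cancel
  | d g =>
    refine Subgroup.mem_normalizer_of_conj_mem ?_ ?_ <;> rintro _ ⟨a, rfl⟩
    · exact ⟨_, dmk_mul_tmk_mul_inv g a a⟩
    · exact ⟨_, inv_dmk_mul_tmk_mul_dmk g a a⟩

theorem nabla_eq_closure : nabla G q = Subgroup.closure {x | ∃ g : G, x = g ⊗ g} :=
  Subgroup.normalClosure_eq_closure_of_normalizer_eq_top normalizer_tmk_self_eq_top

instance : IsMulCommutative (nabla G q) := by
  rw [nabla_eq_closure]
  refine Subgroup.isMulCommutative_closure ?_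
  rintro _ ⟨a, rfl⟩ _ ⟨b, rfl⟩
  exact (commute_tmk_self a b b).eq

theorem commute_tmk_of_mem_nabla {x : tensorSquare G q} (hx : x ∈ nabla G q) (a b : G) :
    Commute x (a ⊗ b) := by
  rw [nabla_eq_closure] at hx
  refine Subgroup.mem_centralizer_singleton_iff.mp ((Subgroup.closure_le _).mpr ?_ hx)
  rintro _ ⟨g, rfl⟩
  exact Subgroup.mem_centralizer_singleton_iff.mpr (commute_tmk_self g a b).eq

theorem map_nabla_eq_self (φ : tensorSquare G q →* nabla G q)
    (hφ : ∀ a : G, (φ (a ⊗ a) : tensorSquare G q) = a ⊗ a) (x : nabla G q) : φ x = x := by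
  have hle : nabla G q ≤ ((nabla G q).subtype.comp φ).eqLocus (MonoidHom.id _) :=
    nabla_eq_closure.trans_le <| (Subgroup.closure_le _).mpr <| by
      rintro _ ⟨a, rfl⟩
      exact hφ a
  exact Subtype.ext (hle x.2)

/-! ### Diagonal and symmetrised tensors -/

variable (q) in
def diag (a : G) : nabla G q := ⟨a ⊗ a, Subgroup.subset_normalClosure ⟨a, rfl⟩⟩

variable (q) in
def symTensor (a b : G) : nabla G q :=
  ⟨(a ⊗ b) * (b ⊗ a), by
    rw [tmk_mul_tmk_swap]
    exact mul_mem (mul_mem (inv_mem (diag q _).2) (diag q _).2) (inv_mem (diag q _).2)⟩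

@[simp]
theorem diag_one : diag q (1 : G) = 1 :=
  Subtype.ext (one_tmk 1)

theorem symTensor_self (a : G) : symTensor q a a = diag q a ^ 2 :=
  Subtype.ext (pow_two _).symm

@[simp]
theorem symTensor_one_left (a : G) : symTensor q 1 a = 1 :=
  Subtype.ext (by simp [symTensor])

theorem symTensor_eq (a b : G) :
    symTensor q a b = (diag q (a * b * a⁻¹))⁻¹ * diag q (a * b) * (diag q (b * a * b⁻¹))⁻¹ :=
  Subtype.ext (tmk_mul_tmk_swap a b)

theorem symTensor_mul_left_conj (u v w : G) :
    symTensor q (u * v) w = symTensor q u w * symTensor q (u * v * u⁻¹) (u * w * u⁻¹) := by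
  refine Subtype.ext ?_
  change (u * v ⊗ w) * (w ⊗ u * v) = (u ⊗ w) * (w ⊗ u) * _
  have hc : Commute ((u ⊗ w) * (w ⊗ u)) (u * v * u⁻¹ ⊗ u * w * u⁻¹) :=
    commute_tmk_of_mem_nabla (symTensor q u w).2 _ _
  rw [tmk_mul_left_s15, tmk_mul_right_s15 w u v, mul_assoc, ← mul_assoc (u ⊗ w), ← mul_assoc _ (_ * _),
    ← hc.eq, mul_assoc]
  rfl

theorem symTensor_inv_self_left (b : G) : symTensor q b⁻¹ b = (symTensor q b b)⁻¹ := by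
  have h := symTensor_mul_left_conj (q := q) b b⁻¹ b
  rw [show b * b⁻¹ * b⁻¹ = b⁻¹ by group, show b * b * b⁻¹ = b by group, mul_inv_cancel,
    symTensor_one_left] at h
  exact eq_inv_of_mul_eq_one_right h.symm

/-- Expand `symTensor q u a` once with `u = a (a⁻¹ u)` and once with `u a⁻¹ = u · a⁻¹`. -/
theorem diag_conj_sq (u a : G) : diag q (u * a * u⁻¹) ^ 2 = diag q a ^ 2 := by
  have h := symTensor_mul_left_conj (q := q) a (a⁻¹ * u) a
  rw [show a * (a⁻¹ * u) * a⁻¹ = u * a⁻¹ by group, show a * (a⁻¹ * u) = u by group,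
    show a * a * a⁻¹ = a by group, symTensor_mul_left_conj,
    show u * a⁻¹ * u⁻¹ = (u * a * u⁻¹)⁻¹ by group, symTensor_inv_self_left, mul_left_comm,
    left_eq_mul, mul_inv_eq_one] at h
  rw [← symTensor_self, ← symTensor_self, h]

variable (G q) in
def DiagConjInvariant : Prop := ∀ u a : G, diag q (u * a * u⁻¹) = diag q a

theorem diag_mul (hd : DiagConjInvariant G q) (a b : G) :
    diag q (a * b) = symTensor q a b * diag q a * diag q b := by
  rw [symTensor_eq, hd, hd, inv_mul_cancel_right, inv_mul_cancel_comm]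

theorem symTensor_comm (hd : DiagConjInvariant G q) (a b : G) :
    symTensor q a b = symTensor q b a := by
  have h : symTensor q a b * (diag q a * diag q b) = symTensor q b a * (diag q a * diag q b) := by
    rw [← mul_assoc, ← diag_mul hd, mul_comm (diag q a), ← mul_assoc, ← diag_mul hd,
      ← hd a (b * a), mul_assoc, mul_assoc, mul_inv_cancel, mul_one]
  exact mul_right_cancel h

theorem symTensor_conj (hd : DiagConjInvariant G q) (u a b : G) :
    symTensor q (u * a * u⁻¹) (u * b * u⁻¹) = symTensor q a b := by
  have h := diag_mul hd (u * a * u⁻¹) (u * b * u⁻¹)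
  rw [show u * a * u⁻¹ * (u * b * u⁻¹) = u * (a * b) * u⁻¹ by group, hd, hd, hd,
    diag_mul hd] at h
  exact (mul_right_cancel (mul_right_cancel h)).symm

theorem symTensor_mul_left (hd : DiagConjInvariant G q) (a b c : G) :
    symTensor q (a * b) c = symTensor q a c * symTensor q b c := by
  rw [symTensor_mul_left_conj, symTensor_conj hd]

theorem symTensor_mul_right (hd : DiagConjInvariant G q) (a b c : G) :
    symTensor q a (b * c) = symTensor q a b * symTensor q a c := by
  rw [symTensor_comm hd, symTensor_mul_left hd, symTensor_comm hd b, symTensor_comm hd c]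

def symTensorHom (hd : DiagConjInvariant G q) : G →* G →* nabla G q :=
  MonoidHom.mk' (fun a => MonoidHom.mk' (symTensor q a) (symTensor_mul_right hd a))
    fun a b => MonoidHom.ext (symTensor_mul_left hd a b)

theorem symTensorHom_apply (hd : DiagConjInvariant G q) (a b : G) :
    symTensorHom hd a b = symTensor q a b := rfl

theorem diag_commutator (hd : DiagConjInvariant G q) (a b : G) :
    diag q (a * b * a⁻¹ * b⁻¹) = 1 := by
  have h : symTensor q (a * b * a⁻¹) b⁻¹ = symTensor q b b⁻¹ := by
    simp only [← symTensorHom_apply hd, map_mul, map_inv, mul_inv_cancel_comm]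
  rw [diag_mul hd, hd, h, ← diag_mul hd, mul_inv_cancel, diag_one]

theorem symTensor_pow_eq_one (hd : DiagConjInvariant G q) (a b : G) :
    symTensor q a b ^ q = 1 := by
  have hcomm : Commute (a ⊗ b) (b ⊗ a) := congrArg Subtype.val (symTensor_comm hd a b)
  have hc : (a * b * a⁻¹ * b⁻¹)⁻¹ ⊗ (a * b * a⁻¹ * b⁻¹)⁻¹ = 1 := by
    rw [show (a * b * a⁻¹ * b⁻¹)⁻¹ = b * a * b⁻¹ * a⁻¹ by group]
    exact congrArg Subtype.val (diag_commutator hd b a)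
  refine Subtype.ext ?_
  change ((a ⊗ b) * (b ⊗ a)) ^ q = 1
  rw [hcomm.mul_pow, ← dmk_commutator, ← dmk_commutator,
    show b * a * b⁻¹ * a⁻¹ = (a * b * a⁻¹ * b⁻¹)⁻¹ by group]
  exact dmk_mul_dmk_inv _ hc

/-! ### Bilinear maps out of `G ⊗^q G` -/

section Lift

variable {A : Type*} [CommGroup A] (β : G →* G →* A) (δ : G → A)

variable (q) in
/-- Relation (4) forces this exponent: `∏_{i=1}^{q-1} β g⁻¹ (g₁ ^ i) = (β g g₁)⁻¹ ^ q.choose 2`. -/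
def genImage : Gen G → A
  | .t a b => β a b
  | .d g => (δ g)⁻¹ ^ q.choose 2

theorem lift_genImage_relProd (g g₁ : G) :
    FreeGroup.lift (genImage q β δ) (relProd G q g g₁) = (β g g₁)⁻¹ ^ q.choose 2 := by
  rw [relProd, map_list_prod, List.map_map, ← List.prod_range_pred_map_pow_succ]
  congr 1
  refine List.map_congr_left fun j _ => ?_
  simp [T, genImage]

theorem lift_genImage_rels (hβ : ∀ a b, β a b ^ q = 1)
    (hδ : ∀ a b, δ (a * b) = β a b * δ a * δ b) (hδc : ∀ a b, δ (a * b * a⁻¹ * b⁻¹) = 1) :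
    ∀ r ∈ rels G q, FreeGroup.lift (genImage q β δ) r = 1 := by
  rintro r ((((((⟨g, g₁, h, rfl⟩ | ⟨g, h, h₁, rfl⟩) | ⟨g, g₁, h₁, rfl⟩) | ⟨g, g₁, rfl⟩) |
    ⟨g, g₁, rfl⟩) | ⟨g, h, rfl⟩) | ⟨rfl, g, rfl⟩)
  · simp only [T, mul_inv_rev, map_mul, FreeGroup.lift_apply_of, genImage, MonoidHom.mul_apply,
      map_inv, mul_inv_cancel_comm]
    rw [← mul_inv, mul_inv_cancel]
  · simp [T, genImage]
  · simp [T, D, genImage]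
  · simp only [D, map_mul, map_inv, FreeGroup.lift_apply_of, genImage, lift_genImage_relProd]
    rw [mul_inv_eq_one, hδ, ← mul_pow, ← mul_pow, mul_inv, mul_inv, mul_comm (β g g₁)⁻¹]
  · simp [T, D, genImage, hβ]
  · simp [T, D, genImage, hβ, hδc]
  · simp [D, genImage]

variable (hβ : ∀ a b, β a b ^ q = 1) (hδ : ∀ a b, δ (a * b) = β a b * δ a * δ b)
  (hδc : ∀ a b, δ (a * b * a⁻¹ * b⁻¹) = 1)

def liftBilinear : tensorSquare G q →* A :=
  PresentedGroup.toGroup (lift_genImage_rels β δ hβ hδ hδc)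

theorem liftBilinear_tmk (a b : G) : liftBilinear β δ hβ hδ hδc (a ⊗ b) = β a b :=
  PresentedGroup.toGroup.of _

end Lift

def symTensorLift (hd : DiagConjInvariant G q) : tensorSquare G q →* nabla G q :=
  liftBilinear (symTensorHom hd) (diag q) (symTensor_pow_eq_one hd) (diag_mul hd)
    (diag_commutator hd)

theorem symTensorLift_tmk (hd : DiagConjInvariant G q) (a b : G) :
    symTensorLift hd (a ⊗ b) = symTensor q a b :=
  liftBilinear_tmk _ _ _ _ _ a b

/-! ### Diagonal elements of odd order -/

section OddOrder

variable {j : ℤ} (h : ∀ g : G, tmk G q g g ^ (2 * j + 1) = 1)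
include h

theorem diag_eq_sq_zpow (a : G) : diag q a = (diag q a ^ 2) ^ (-j) :=
  (sq_zpow_neg_eq_self (Subtype.ext ((SubgroupClass.coe_zpow _ _).trans (h a)))).symm

theorem diagConjInvariant_of_odd : DiagConjInvariant G q := fun u a => by
  rw [diag_eq_sq_zpow h, diag_conj_sq, ← diag_eq_sq_zpow h]

/-- `-j` inverts `2` modulo the order `2 j + 1` of the diagonal elements. -/
def retraction : tensorSquare G q →* nabla G q :=
  (zpowGroupHom (-j)).comp (symTensorLift (diagConjInvariant_of_odd h))

theorem retraction_tmk_self (a : G) : (retraction h (a ⊗ a) : tensorSquare G q) = a ⊗ a := by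
  change ((symTensorLift _ (a ⊗ a) ^ (-j) : nabla G q) : tensorSquare G q) = _
  rw [symTensorLift_tmk, symTensor_self, ← diag_eq_sq_zpow h]
  rfl

end OddOrder

end QTensor

open QTensor in
/-- If `k` is odd and `(g ⊗ g)^k = 1` for all `g ∈ G`, then
`G ⊗^q G ≅ ∇^q(G) × (G ∧^q G)`. -/
theorem tensorSquare_iso_nabla_prod_extSquare (q : ℕ) (G : Type) [Group G]
    (k : ℤ) (hk : Odd k) (h : ∀ g : G, (tmk G q g g) ^ k = 1) :
    Nonempty (tensorSquare G q ≃* (nabla G q) × extSquare G q) := by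
  obtain ⟨j, rfl⟩ := hk
  exact ⟨(nabla G q).prodQuotientEquivOfRetraction (retraction h)
    (map_nabla_eq_self _ (retraction_tmk_self h))⟩
end
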